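/- For τ in the upper half-plane ℍ and any z ∈ ℂ with z ∉ L_τ, writing q_z = e^{2πiz}, one has δθ(z,τ) = πi·(q_z+1)/(q_z−1) − 2πi·Σ_{n≥1} ( qⁿq_z/(1−qⁿq_z) − qⁿq_z^{−1}/(1−qⁿq_z^{−1}) ), where the series on the right converges absolutely. -/

import Mathlib

noncomputable section
open Complex Real

/-- membership in the lattice `L_τ = ℤτ + ℤ` -/
def InLattice (τ z : ℂ) : Prop := ∃ m n : ℤ, z = m * τ + n

/-- the theta function `θ(z,τ) = (1/i)·Σ_{n∈ℤ} (−1)^n q^{(2n+1)²/8} e^{(2n+1)πiz}`,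
where `q^{(2n+1)²/8} = exp(2πiτ·(2n+1)²/8)`. -/
def theta (z τ : ℂ) : ℂ :=
  (1 / I) * ∑' n : ℤ, (-1 : ℂ) ^ n *
    Complex.exp (2 * π * I * τ * (2 * n + 1) ^ 2 / 8) *
    Complex.exp ((2 * n + 1) * π * I * z)

/-- the logarithmic derivative `δθ(z,τ) = ∂_zθ(z,τ)/θ(z,τ)` -/
def dlogTheta (z τ : ℂ) : ℂ := deriv (fun w => theta w τ) z / theta z τ

/-- the lattice point `mτ + n` attached to `p = (m,n) ∈ ℤ²` -/
def latPt (τ : ℂ) (p : ℤ × ℤ) : ℂ := p.1 * τ + p.2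

/-- the Weierstrass `℘`-function of the lattice `L_τ` -/
def wp (z τ : ℂ) : ℂ :=
  1 / z ^ 2 + ∑' p : ℤ × ℤ,
    if p = (0, 0) then 0 else (1 / (z - latPt τ p) ^ 2 - 1 / latPt τ p ^ 2)

/-- the derivative `℘'(z,τ) = −2·Σ_{ω∈L_τ} 1/(z−ω)³` -/
def wpPrime (z τ : ℂ) : ℂ := ∑' p : ℤ × ℤ, -2 / (z - latPt τ p) ^ 3

/-- the Weierstrass zeta function of the lattice `L_τ` -/
def wZeta (z τ : ℂ) : ℂ :=
  1 / z + ∑' p : ℤ × ℤ,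
    if p = (0, 0) then 0
    else (1 / (z - latPt τ p) + 1 / latPt τ p + z / latPt τ p ^ 2)

/-!
Both `θ(·, τ)` and the product `F(z) = (e^{πiz} - e^{-πiz}) ∏_{n ≥ 1} (1 - qⁿq_z)(1 - qⁿq_z⁻¹)`
are entire, are multiplied by `-1` under `z ↦ z + 1` and by `-e^{-πi(τ + 2z)}` under `z ↦ z + τ`,
and `F` has simple zeros exactly at `L_τ`, where `θ` vanishes as well. Hence `θ / F`, completed at
the lattice by l'Hôpital's rule, is entire and doubly periodic, so a constant `C` by Liouville's
theorem; `C ≠ 0` since `θ ≢ 0`, the zeroth Fourier coefficient of `jacobiTheta₂ (·, τ)`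
on `[0, 1]` being `1`. The expansion is the logarithmic derivative of `F`, taken factor by factor.
-/

open Filter Topology Function

/-- `(qx; q)_∞` in q-Pochhammer notation. -/
def qPoch (q x : ℂ) : ℂ := ∏' n : ℕ, (1 - q ^ (n + 1) * x)

section qPoch

variable {q : ℂ}

lemma summable_norm_pow_succ_mul (hq : ‖q‖ < 1) (x : ℂ) :
    Summable fun n : ℕ => ‖q ^ (n + 1) * x‖ := by
  simpa [norm_mul, norm_pow, pow_succ, mul_assoc] using
    (summable_geometric_of_lt_one (norm_nonneg q) hq).mul_right (‖q‖ * ‖x‖)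

lemma multipliable_one_sub_pow_succ_mul (hq : ‖q‖ < 1) (x : ℂ) :
    Multipliable fun n : ℕ => 1 - q ^ (n + 1) * x := by
  simpa [sub_eq_add_neg] using
    multipliable_one_add_of_summable (f := fun n : ℕ => -(q ^ (n + 1) * x))
      (by simpa using summable_norm_pow_succ_mul hq x)

lemma one_sub_mul_mul_qPoch_mul (hq : ‖q‖ < 1) (x : ℂ) :
    (1 - q * x) * qPoch q (q * x) = qPoch q x := by
  rw [qPoch, qPoch, tprod_eq_zero_mul' (f := fun n : ℕ => 1 - q ^ (n + 1) * x)]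
  · simp [pow_succ, mul_assoc]
  · simpa [pow_succ, mul_assoc] using multipliable_one_sub_pow_succ_mul hq (q * x)

lemma qPoch_ne_zero (hq : ‖q‖ < 1) {x : ℂ} (hx : ∀ n : ℕ, q ^ (n + 1) * x ≠ 1) :
    qPoch q x ≠ 0 := by
  simpa [qPoch, sub_eq_add_neg] using
    tprod_one_add_ne_zero_of_summable (f := fun n : ℕ => -(q ^ (n + 1) * x))
      (fun n => by rw [← sub_eq_add_neg, sub_ne_zero]; exact (hx n).symm)
      (by simpa using summable_norm_pow_succ_mul hq x)

lemma hasProdLocallyUniformlyOn_qPoch (hq : ‖q‖ < 1) :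
    HasProdLocallyUniformlyOn (fun (n : ℕ) x => 1 - q ^ (n + 1) * x) (qPoch q) Set.univ := by
  refine hasProdLocallyUniformlyOn_of_forall_compact isOpen_univ fun K _ hK => ?_
  obtain ⟨R, hR⟩ := hK.isBounded.exists_norm_le
  rw [show qPoch q = fun x => ∏' n : ℕ, (1 + -(q ^ (n + 1) * x)) from
    funext fun x => by simp [qPoch, sub_eq_add_neg]]
  simpa [sub_eq_add_neg] using
    Summable.hasProdUniformlyOn_nat_one_add (f := fun (n : ℕ) x => -(q ^ (n + 1) * x)) hK
      (summable_norm_pow_succ_mul hq R)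
      (.of_forall fun n x hx => by
        simpa [norm_mul] using mul_le_mul_of_nonneg_left ((hR x hx).trans (le_abs_self R))
          (by positivity))
      (fun n => by fun_prop)

lemma differentiable_qPoch (hq : ‖q‖ < 1) : Differentiable ℂ (qPoch q) := by
  rw [← differentiableOn_univ]
  exact (hasProdLocallyUniformlyOn_qPoch hq).differentiableOn
    (.of_forall fun s => by simpa [Finset.prod_fn] using
      DifferentiableOn.finsetProd (fun _ _ => by fun_prop)) isOpen_univ

lemma summable_norm_pow_succ_mul_div (hq : ‖q‖ < 1) (x y : ℂ) :
    Summable fun n : ℕ => ‖q ^ (n + 1) * y / (1 - q ^ (n + 1) * x)‖ := by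
  have hlim : Tendsto (fun n : ℕ => (1 - q ^ (n + 1) * x)⁻¹) atTop (𝓝 1) := by
    simpa using (((tendsto_pow_atTop_nhds_zero_of_norm_lt_one hq).comp
      (tendsto_add_atTop_nat 1)).mul_const x).const_sub 1 |>.inv₀ (by simp)
  have h := (Asymptotics.isBigO_refl (fun n : ℕ => q ^ (n + 1) * y) atTop).mul
    (hlim.isBigO_one ℂ)
  simp only [mul_one] at h
  simpa [div_eq_mul_inv] using
    summable_of_isBigO_nat (summable_norm_pow_succ_mul hq y) h.norm_left.norm_right

lemma logDeriv_one_sub_mul (a x : ℂ) : logDeriv (fun x => 1 - a * x) x = -a / (1 - a * x) := by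
  simp [logDeriv_apply]

lemma mul_logDeriv_qPoch (hq : ‖q‖ < 1) {x : ℂ} (hx : ∀ n : ℕ, q ^ (n + 1) * x ≠ 1) :
    x * logDeriv (qPoch q) x = -∑' n : ℕ, q ^ (n + 1) * x / (1 - q ^ (n + 1) * x) := by
  have hne : ∀ n : ℕ, 1 - q ^ (n + 1) * x ≠ 0 := fun n => sub_ne_zero.2 (hx n).symm
  have hlog := logDeriv_tprod_eq_tsum isOpen_univ (Set.mem_univ x) hne (fun n => by fun_prop)
    ((summable_norm_pow_succ_mul_div hq x 1).of_norm.neg.congr fun n => by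
      simp [logDeriv_one_sub_mul, neg_div])
    ⟨_, hasProdLocallyUniformlyOn_qPoch hq⟩ (qPoch_ne_zero hq hx)
  rw [show qPoch q = fun x => ∏' n : ℕ, (1 - q ^ (n + 1) * x) from rfl, hlog,
    ← tsum_mul_left, ← tsum_neg]
  exact tsum_congr fun n => by rw [logDeriv_one_sub_mul]; ring

lemma hasDerivAt_cexp_mul (c z : ℂ) : HasDerivAt (fun z => cexp (c * z)) (c * cexp (c * z)) z := by
  simpa [mul_comm] using ((hasDerivAt_id z).const_mul c).cexp

lemma logDeriv_qPoch_comp_cexp (hq : ‖q‖ < 1) (c z : ℂ)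
    (hz : ∀ n : ℕ, q ^ (n + 1) * cexp (c * z) ≠ 1) :
    logDeriv (fun z => qPoch q (cexp (c * z))) z =
      -c * ∑' n : ℕ, q ^ (n + 1) * cexp (c * z) / (1 - q ^ (n + 1) * cexp (c * z)) := by
  rw [show (fun z => qPoch q (cexp (c * z))) = qPoch q ∘ fun z => cexp (c * z) from rfl,
    logDeriv_comp (differentiable_qPoch hq _) (by fun_prop), (hasDerivAt_cexp_mul c z).deriv,
    neg_mul, ← mul_neg, ← mul_logDeriv_qPoch hq hz]
  ring

end qPoch

section QuasiPeriodic
variable {f g c : ℂ → ℂ} {ω : ℂ}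

lemma periodic_eq_zero_of_quasiPeriodic (hc : ∀ z, c z ≠ 0) (hf : ∀ z, f (z + ω) = c z * f z) :
    Periodic (fun z => f z = 0) ω := fun z => by simp [hf, hc z]

lemma deriv_add_eq_mul_of_quasiPeriodic (hf : Differentiable ℂ f) (hc : Differentiable ℂ c)
    (hfω : ∀ z, f (z + ω) = c z * f z) {z : ℂ} (hz : f z = 0) :
    deriv f (z + ω) = c z * deriv f z := by
  rw [← deriv_comp_add_const, funext hfω, deriv_fun_mul (hc z) (hf z), hz]
  ring

lemma periodic_simpleZero_of_quasiPeriodic (hf : Differentiable ℂ f) (hc : Differentiable ℂ c)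
    (hc0 : ∀ z, c z ≠ 0) (hfω : ∀ z, f (z + ω) = c z * f z) :
    Periodic (fun z => f z = 0 ∧ deriv f z ≠ 0) ω := fun z => by
  by_cases hz : f z = 0
  · simp [hfω, hz, deriv_add_eq_mul_of_quasiPeriodic hf hc hfω hz, hc0 z]
  · simp [hfω, hz, hc0 z]

def lhopitalDiv (f g : ℂ → ℂ) (z : ℂ) : ℂ :=
  if g z = 0 then deriv f z / deriv g z else f z / g z

lemma lhopitalDiv_mul (hfg : ∀ z, g z = 0 → f z = 0) (z : ℂ) :
    lhopitalDiv f g z * g z = f z := by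
  by_cases hz : g z = 0
  · simp [hz, hfg z hz]
  · simp [lhopitalDiv, hz]

lemma lhopitalDiv_eventuallyEq_dslope_div (hg : Differentiable ℂ g) {a : ℂ} (hfa : f a = 0)
    (hga : g a = 0) (hg'a : deriv g a ≠ 0) :
    lhopitalDiv f g =ᶠ[𝓝 a] fun z => dslope f a z / dslope g a z := by
  have hne := eventually_nhdsWithin_iff.1 ((hg a).hasDerivAt.eventually_ne (c := 0) hg'a)
  filter_upwards [hne] with z hz
  by_cases hza : z = a
  · subst hza
    simp [lhopitalDiv, hga]
  · have hza' : z - a ≠ 0 := sub_ne_zero.2 hza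
    simp only [lhopitalDiv, hz hza, if_false, dslope_of_ne _ hza, slope_def_field, hfa, hga,
      sub_zero]
    field_simp

lemma differentiable_lhopitalDiv (hf : Differentiable ℂ f) (hg : Differentiable ℂ g)
    (hfg : ∀ z, g z = 0 → f z = 0 ∧ deriv g z ≠ 0) : Differentiable ℂ (lhopitalDiv f g) := by
  intro a
  by_cases ha : g a = 0
  · obtain ⟨hfa, hg'a⟩ := hfg a ha
    have hdslope : ∀ {h : ℂ → ℂ}, Differentiable ℂ h → DifferentiableAt ℂ (dslope h a) a :=
      fun hh => ((Complex.differentiableOn_dslope univ_mem).2 hh.differentiableOn).differentiableAt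
        univ_mem
    refine ((hdslope hf).div (hdslope hg) ?_).congr_of_eventuallyEq
      (lhopitalDiv_eventuallyEq_dslope_div hg hfa ha hg'a)
    rwa [dslope_same]
  · refine ((hf a).div (hg a) ha).congr_of_eventuallyEq ?_
    filter_upwards [(hg a).continuousAt.eventually_ne ha] with z hz
    simp [lhopitalDiv, hz]

lemma lhopitalDiv_add_of_quasiPeriodic (hf : Differentiable ℂ f) (hg : Differentiable ℂ g)
    (hc : Differentiable ℂ c) (hc0 : ∀ z, c z ≠ 0) (hfω : ∀ z, f (z + ω) = c z * f z)
    (hgω : ∀ z, g (z + ω) = c z * g z) (hfg : ∀ z, g z = 0 → f z = 0) (z : ℂ) :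
    lhopitalDiv f g (z + ω) = lhopitalDiv f g z := by
  by_cases hz : g z = 0
  · simp only [lhopitalDiv, hgω, hz, mul_zero, if_true,
      deriv_add_eq_mul_of_quasiPeriodic hf hc hfω (hfg z hz),
      deriv_add_eq_mul_of_quasiPeriodic hg hc hgω hz]
    exact mul_div_mul_left _ _ (hc0 z)
  · simp only [lhopitalDiv, hgω, hz, mul_eq_zero, hc0 z, false_or, if_false, hfω]
    exact mul_div_mul_left _ _ (hc0 z)

end QuasiPeriodic

section Lattice
variable {α : Type*} {τ : ℂ}

lemma InLattice.neg {z : ℂ} (h : InLattice τ z) : InLattice τ (-z) := by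
  obtain ⟨m, n, rfl⟩ := h
  exact ⟨-m, -n, by push_cast; ring⟩

lemma cexp_two_pi_I_ne_one_of_not_inLattice {z : ℂ} (hz : ¬ InLattice τ z) (m : ℤ) :
    cexp (2 * π * I * (m * τ + z)) ≠ 1 := by
  rw [Ne, Complex.exp_eq_one_iff]
  rintro ⟨n, hn⟩
  refine hz ⟨-m, n, mul_left_cancel₀ two_pi_I_ne_zero ?_⟩
  push_cast
  linear_combination hn


lemma periodic_int_mul_add (f : ℂ → α) (h1 : Periodic f 1) (hτ : Periodic f τ) (m n : ℤ) :
    Periodic f (m * τ + n) := by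
  simpa using (hτ.int_mul m).add_period (h1.int_mul n)

lemma apply_eq_apply_zero_of_inLattice {f : ℂ → α} (h1 : Periodic f 1) (hτ : Periodic f τ)
    {z : ℂ} (hz : InLattice τ z) : f z = f 0 := by
  obtain ⟨m, n, rfl⟩ := hz
  exact (periodic_int_mul_add f h1 hτ m n).eq

lemma isBounded_range_of_periodic {E : Type*} [NormedAddCommGroup E] (hτ : 0 < τ.im)
    {f : ℂ → E} (hf : Continuous f) (h1 : Periodic f 1) (h2 : Periodic f τ) :
    Bornology.IsBounded (Set.range f) := by
  let cell : ℝ × ℝ → ℂ := fun p => p.1 * τ + p.2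
  have hcell : IsCompact (f '' (cell '' Set.Icc 0 1)) :=
    (isCompact_Icc.image (by fun_prop)).image hf
  refine hcell.isBounded.subset ?_
  rintro _ ⟨z, rfl⟩
  set a := z.im / τ.im
  set b := z.re - a * τ.re
  have hab : z = a * τ + b := by
    apply Complex.ext <;> simp [a, b]
    field_simp
  have hz : z = (Int.fract a * τ + Int.fract b) + (⌊a⌋ * τ + ⌊b⌋) := by
    have ha : ((Int.fract a + ⌊a⌋ : ℝ) : ℂ) = a := congrArg _ (Int.fract_add_floor a)
    have hb : ((Int.fract b + ⌊b⌋ : ℝ) : ℂ) = b := congrArg _ (Int.fract_add_floor b)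
    push_cast at ha hb
    linear_combination hab - τ * ha - hb
  refine ⟨cell (Int.fract a, Int.fract b), ⟨_, ⟨⟨Int.fract_nonneg a, Int.fract_nonneg b⟩,
    ⟨(Int.fract_lt_one a).le, (Int.fract_lt_one b).le⟩⟩, rfl⟩, ?_⟩
  rw [hz, periodic_int_mul_add f h1 h2]

end Lattice

section Fourier
open MeasureTheory

lemma integral_cexp_two_pi_I_int_mul (n : ℤ) :
    ∫ x in (0 : ℝ)..1, cexp (2 * π * I * n * x) = if n = 0 then 1 else 0 := by
  split_ifs with hn
  · simp [hn]
  · have hc : 2 * π * I * n ≠ 0 := mul_ne_zero two_pi_I_ne_zero (Int.cast_ne_zero.2 hn)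
    rw [integral_exp_mul_complex hc, div_eq_zero_iff]
    left
    rw [Complex.ofReal_one, Complex.ofReal_zero, mul_one, mul_zero, Complex.exp_zero, sub_eq_zero,
      mul_comm, Complex.exp_int_mul_two_pi_mul_I]

lemma integral_tsum_mul_cexp {a : ℤ → ℂ} (ha : Summable fun n => ‖a n‖) :
    ∫ x in (0 : ℝ)..1, ∑' n : ℤ, a n * cexp (2 * π * I * n * x) = a 0 := by
  have hnorm : ∀ (n : ℤ) (x : ℝ), ‖a n * cexp (2 * π * I * n * x)‖ = ‖a n‖ := fun n x => by
    rw [norm_mul, Complex.norm_exp]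
    simp
  rw [intervalIntegral.integral_of_le zero_le_one, ← integral_tsum_of_summable_integral_norm
    (fun n => (Continuous.integrableOn_Ioc (by fun_prop)))]
  · simp_rw [← intervalIntegral.integral_of_le zero_le_one, intervalIntegral.integral_const_mul,
      integral_cexp_two_pi_I_int_mul, mul_ite, mul_one, mul_zero]
    simp
  · simp_rw [hnorm]
    simpa using ha

lemma jacobiTheta₂_eq_tsum_mul_cexp (z τ : ℂ) :
    jacobiTheta₂ z τ = ∑' n : ℤ, cexp (π * I * n ^ 2 * τ) * cexp (2 * π * I * n * z) :=
  tsum_congr fun n => by rw [jacobiTheta₂_term, ← Complex.exp_add, add_comm]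

lemma exists_jacobiTheta₂_ne_zero {τ : ℂ} (hτ : 0 < τ.im) : ∃ x : ℝ, jacobiTheta₂ x τ ≠ 0 := by
  by_contra! h
  have hsum : Summable fun n : ℤ => ‖cexp (π * I * n ^ 2 * τ)‖ := by
    simpa [jacobiTheta₂_term] using
      summable_norm_iff.2 ((summable_jacobiTheta₂_term_iff 0 τ).2 hτ)
  have h1 := integral_tsum_mul_cexp hsum
  simp_rw [← jacobiTheta₂_eq_tsum_mul_cexp, h, intervalIntegral.integral_zero] at h1
  simp at h1

end Fourier

def thetaFactor (τ z : ℂ) : ℂ := -cexp (-(π * I * (τ + 2 * z)))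

lemma differentiable_thetaFactor (τ : ℂ) : Differentiable ℂ (thetaFactor τ) := by
  unfold thetaFactor
  fun_prop

lemma thetaFactor_ne_zero (τ z : ℂ) : thetaFactor τ z ≠ 0 :=
  neg_ne_zero.2 (Complex.exp_ne_zero _)

section theta
variable {τ : ℂ}

lemma theta_eq_jacobiTheta₂ (z τ : ℂ) :
    theta z τ = (1 / I) * cexp (π * I * τ / 4 + π * I * z) * jacobiTheta₂ (z + (τ + 1) / 2) τ := by
  rw [theta, jacobiTheta₂, mul_assoc (1 / I),
    ← tsum_mul_left (a := cexp (π * I * τ / 4 + π * I * z))]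
  congr 1
  refine tsum_congr fun n => ?_
  rw [jacobiTheta₂_term, ← Complex.exp_pi_mul_I, ← Complex.exp_int_mul, ← Complex.exp_add,
    ← Complex.exp_add, ← Complex.exp_add]
  congr 1
  ring

lemma differentiable_theta (hτ : 0 < τ.im) : Differentiable ℂ (theta · τ) := by
  simp_rw [theta_eq_jacobiTheta₂]
  have : Differentiable ℂ (jacobiTheta₂ · τ) := fun z => differentiableAt_jacobiTheta₂_fst z hτ
  fun_prop

lemma theta_add_one (z : ℂ) : theta (z + 1) τ = -1 * theta z τ := by
  rw [theta_eq_jacobiTheta₂, theta_eq_jacobiTheta₂, show z + 1 + (τ + 1) / 2 = z + (τ + 1) / 2 + 1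
    by ring, jacobiTheta₂_add_left, mul_add, mul_one, ← add_assoc, Complex.exp_add_pi_mul_I]
  ring

lemma theta_add_tau (z : ℂ) :
    theta (z + τ) τ = thetaFactor τ z * theta z τ := by
  rw [thetaFactor, theta_eq_jacobiTheta₂, theta_eq_jacobiTheta₂,
    show z + τ + (τ + 1) / 2 = z + (τ + 1) / 2 + τ by ring, jacobiTheta₂_add_left']
  have : cexp (π * I * τ / 4 + π * I * (z + τ)) * cexp (-π * I * (τ + 2 * (z + (τ + 1) / 2))) =
      -cexp (-(π * I * (τ + 2 * z))) * cexp (π * I * τ / 4 + π * I * z) := by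
    rw [← Complex.exp_add, neg_mul (cexp _), ← Complex.exp_add, ← Complex.exp_sub_pi_mul_I]
    ring_nf
  linear_combination (1 / I) * jacobiTheta₂ (z + (τ + 1) / 2) τ * this

lemma theta_zero : theta 0 τ = 0 := by
  have h := jacobiTheta₂_add_left' (-((τ + 1) / 2)) τ
  rw [show -((τ + 1) / 2) + τ = (τ + 1) / 2 + -1 by ring, ← sub_eq_add_neg,
    show -π * I * (τ + 2 * -((τ + 1) / 2)) = 0 + π * I by ring, Complex.exp_add_pi_mul_I,
    jacobiTheta₂_neg_left, ← jacobiTheta₂_add_left ((τ + 1) / 2 - 1), sub_add_cancel,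
    Complex.exp_zero] at h
  rw [theta_eq_jacobiTheta₂, zero_add, show jacobiTheta₂ ((τ + 1) / 2) τ = 0 by
    linear_combination h / 2, mul_zero]

lemma exists_theta_ne_zero (hτ : 0 < τ.im) : ∃ z, theta z τ ≠ 0 := by
  obtain ⟨x, hx⟩ := exists_jacobiTheta₂_ne_zero hτ
  refine ⟨x - (τ + 1) / 2, ?_⟩
  rw [theta_eq_jacobiTheta₂, sub_add_cancel]
  exact mul_ne_zero (mul_ne_zero (by simp) (Complex.exp_ne_zero _)) hx

end theta

def thetaProd (τ z : ℂ) : ℂ :=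
  (cexp (π * I * z) - cexp (-(π * I * z))) * qPoch (cexp (2 * π * I * τ)) (cexp (2 * π * I * z)) *
    qPoch (cexp (2 * π * I * τ)) (cexp (-(2 * π * I * z)))

section thetaProd

variable {τ : ℂ}

lemma norm_cexp_two_pi_I_lt_one (hτ : 0 < τ.im) : ‖cexp (2 * π * I * τ)‖ < 1 := by
  rw [Complex.norm_exp, Real.exp_lt_one_iff]
  simpa using mul_pos Real.two_pi_pos hτ

lemma pow_succ_mul_cexp_ne_one {z : ℂ} (hz : ¬ InLattice τ z) (n : ℕ) :
    cexp (2 * π * I * τ) ^ (n + 1) * cexp (2 * π * I * z) ≠ 1 := by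
  convert cexp_two_pi_I_ne_one_of_not_inLattice hz (n + 1) using 1
  rw [← Complex.exp_nat_mul, ← Complex.exp_add]
  push_cast
  ring_nf

lemma pow_succ_mul_cexp_neg_ne_one {z : ℂ} (hz : ¬ InLattice τ z) (n : ℕ) :
    cexp (2 * π * I * τ) ^ (n + 1) * cexp (-(2 * π * I * z)) ≠ 1 := by
  convert cexp_two_pi_I_ne_one_of_not_inLattice (z := -z) (fun h => hz (by simpa using h.neg))
    (n + 1) using 1
  rw [← Complex.exp_nat_mul, ← Complex.exp_add]
  push_cast
  ring_nf

lemma thetaProd_ne_zero (hτ : 0 < τ.im) {z : ℂ} (hz : ¬ InLattice τ z) : thetaProd τ z ≠ 0 := by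
  have hq := norm_cexp_two_pi_I_lt_one hτ
  refine mul_ne_zero (mul_ne_zero ?_ (qPoch_ne_zero hq (pow_succ_mul_cexp_ne_one hz)))
    (qPoch_ne_zero hq (pow_succ_mul_cexp_neg_ne_one hz))
  intro h
  apply cexp_two_pi_I_ne_one_of_not_inLattice hz 0
  rw [sub_eq_zero] at h
  rw [Int.cast_zero, zero_mul, zero_add,
    show 2 * π * I * z = π * I * z - -(π * I * z) by ring, Complex.exp_sub, h, div_self]
  exact Complex.exp_ne_zero _

lemma thetaProd_zero : thetaProd τ 0 = 0 := by simp [thetaProd]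

lemma thetaProd_add_one (z : ℂ) : thetaProd τ (z + 1) = -1 * thetaProd τ z := by
  have h1 : cexp (π * I * (z + 1)) = -cexp (π * I * z) := by
    rw [mul_add, mul_one, Complex.exp_add, Complex.exp_pi_mul_I]; ring
  have h2 : cexp (-(π * I * (z + 1))) = -cexp (-(π * I * z)) := by
    rw [mul_add, mul_one, neg_add, Complex.exp_add, Complex.exp_neg (π * I),
      Complex.exp_pi_mul_I]; ring
  have h3 : cexp (2 * π * I * (z + 1)) = cexp (2 * π * I * z) := by
    rw [mul_add, mul_one, Complex.exp_add, Complex.exp_two_pi_mul_I, mul_one]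
  have h4 : cexp (-(2 * π * I * (z + 1))) = cexp (-(2 * π * I * z)) := by
    rw [mul_add, mul_one, neg_add, Complex.exp_add, Complex.exp_neg (2 * π * I),
      Complex.exp_two_pi_mul_I, inv_one, mul_one]
  rw [thetaProd, thetaProd, h1, h2, h3, h4]
  ring

lemma thetaProd_add_tau (hτ : 0 < τ.im) (z : ℂ) :
    thetaProd τ (z + τ) = thetaFactor τ z * thetaProd τ z := by
  have hq := norm_cexp_two_pi_I_lt_one hτ
  have hqp : cexp (2 * π * I * τ) = cexp (π * I * τ) ^ 2 := by
    rw [← Complex.exp_nat_mul]; ring_nf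
  have he : cexp (2 * π * I * z) = cexp (π * I * z) ^ 2 := by
    rw [← Complex.exp_nat_mul]; ring_nf
  have he' : cexp (-(2 * π * I * z)) = (cexp (π * I * z))⁻¹ ^ 2 := by
    rw [← Complex.exp_neg, ← Complex.exp_nat_mul]; ring_nf
  have h1 : cexp (π * I * (z + τ)) = cexp (π * I * z) * cexp (π * I * τ) := by
    rw [mul_add, Complex.exp_add]
  have h2 : cexp (-(π * I * (z + τ))) = (cexp (π * I * z))⁻¹ * (cexp (π * I * τ))⁻¹ := by
    rw [← mul_inv, ← h1, Complex.exp_neg]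
  have h3 : cexp (2 * π * I * (z + τ)) = cexp (2 * π * I * τ) * cexp (π * I * z) ^ 2 := by
    rw [← he, mul_add, Complex.exp_add, mul_comm]
  have h4 : cexp (-(2 * π * I * (z + τ))) =
      (cexp (2 * π * I * τ))⁻¹ * (cexp (π * I * z))⁻¹ ^ 2 := by
    rw [← he', mul_add, neg_add, Complex.exp_add, Complex.exp_neg (2 * π * I * τ), mul_comm]
  have h5 : cexp (-(π * I * (τ + 2 * z))) = (cexp (π * I * τ))⁻¹ * (cexp (π * I * z))⁻¹ ^ 2 := by
    rw [← he', ← Complex.exp_neg, ← Complex.exp_add]; ring_nf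
  have hshift := one_sub_mul_mul_qPoch_mul hq ((cexp (2 * π * I * τ))⁻¹ * (cexp (π * I * z))⁻¹ ^ 2)
  rw [← mul_assoc, mul_inv_cancel₀ (Complex.exp_ne_zero _), one_mul] at hshift
  rw [thetaFactor, thetaProd, thetaProd, h1, h2, h3, h4, h5, ← hshift,
    Complex.exp_neg (π * I * z), he, he',
    ← one_sub_mul_mul_qPoch_mul hq (cexp (π * I * z) ^ 2)]
  generalize qPoch _ (cexp (2 * π * I * τ) * cexp (π * I * z) ^ 2) = A
  generalize qPoch _ ((cexp (π * I * z))⁻¹ ^ 2) = B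
  rw [hqp]
  have hw := Complex.exp_ne_zero (π * I * z)
  have hp := Complex.exp_ne_zero (π * I * τ)
  generalize cexp (π * I * z) = w at *
  generalize cexp (π * I * τ) = p at *
  field_simp
  ring

lemma differentiable_thetaProd (hτ : 0 < τ.im) : Differentiable ℂ (thetaProd τ) := by
  have hP := differentiable_qPoch (norm_cexp_two_pi_I_lt_one hτ)
  unfold thetaProd
  fun_prop

lemma hasDerivAt_sub_cexp_neg (z : ℂ) :
    HasDerivAt (fun z => cexp (π * I * z) - cexp (-(π * I * z)))
      (π * I * (cexp (π * I * z) + cexp (-(π * I * z)))) z := by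
  have h := (hasDerivAt_cexp_mul (π * I) z).fun_sub (hasDerivAt_cexp_mul (-(π * I)) z)
  simp only [neg_mul] at h
  exact h.congr_deriv (by ring)

lemma deriv_thetaProd_zero_ne_zero (hτ : 0 < τ.im) : deriv (thetaProd τ) 0 ≠ 0 := by
  have hq := norm_cexp_two_pi_I_lt_one hτ
  have hP : DifferentiableAt ℂ (fun z => qPoch (cexp (2 * π * I * τ)) (cexp (2 * π * I * z)) *
      qPoch (cexp (2 * π * I * τ)) (cexp (-(2 * π * I * z)))) 0 := by
    have := differentiable_qPoch hq
    fun_prop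
  have h := ((hasDerivAt_sub_cexp_neg 0).fun_mul hP.hasDerivAt).deriv
  simp only [mul_zero, neg_zero, Complex.exp_zero, sub_self, zero_mul, add_zero] at h
  rw [show thetaProd τ = fun z => (cexp (π * I * z) - cexp (-(π * I * z))) *
    (qPoch (cexp (2 * π * I * τ)) (cexp (2 * π * I * z)) *
      qPoch (cexp (2 * π * I * τ)) (cexp (-(2 * π * I * z)))) from
    funext fun z => mul_assoc _ _ _, h]
  have h1 : qPoch (cexp (2 * π * I * τ)) 1 ≠ 0 := qPoch_ne_zero hq fun n h1 => by
    have h2 := congrArg norm h1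
    rw [mul_one, norm_pow, norm_one] at h2
    exact (pow_lt_one₀ (norm_nonneg _) hq (Nat.succ_ne_zero n)).ne h2
  exact mul_ne_zero (by simp [Real.pi_ne_zero, I_ne_zero]) (mul_ne_zero h1 h1)

lemma logDeriv_sub_cexp_neg {z : ℂ} (hz : cexp (π * I * z) - cexp (-(π * I * z)) ≠ 0) :
    logDeriv (fun z => cexp (π * I * z) - cexp (-(π * I * z))) z =
      π * I * (cexp (2 * π * I * z) + 1) / (cexp (2 * π * I * z) - 1) := by
  have he : cexp (2 * π * I * z) = cexp (π * I * z) ^ 2 := by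
    rw [← Complex.exp_nat_mul]; ring_nf
  rw [logDeriv_apply, (hasDerivAt_sub_cexp_neg z).deriv, he, Complex.exp_neg] at *
  have hw := Complex.exp_ne_zero (π * I * z)
  generalize cexp (π * I * z) = w at *
  have hw2 : w ^ 2 - 1 ≠ 0 := fun h => hz (by field_simp; linear_combination h)
  field_simp

lemma logDeriv_thetaProd (hτ : 0 < τ.im) {z : ℂ} (hz : ¬ InLattice τ z) :
    logDeriv (thetaProd τ) z =
      π * I * (cexp (2 * π * I * z) + 1) / (cexp (2 * π * I * z) - 1) -
      2 * π * I * ∑' n : ℕ,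
        (cexp (2 * π * I * τ) ^ (n + 1) * cexp (2 * π * I * z) /
            (1 - cexp (2 * π * I * τ) ^ (n + 1) * cexp (2 * π * I * z)) -
          cexp (2 * π * I * τ) ^ (n + 1) * (cexp (2 * π * I * z))⁻¹ /
            (1 - cexp (2 * π * I * τ) ^ (n + 1) * (cexp (2 * π * I * z))⁻¹)) := by
  have hq := norm_cexp_two_pi_I_lt_one hτ
  have hP := differentiable_qPoch hq
  obtain ⟨⟨hW, h1⟩, h2⟩ := mul_ne_zero_iff.1 (thetaProd_ne_zero hτ hz) |>.imp_left mul_ne_zero_iff.1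
  have hlog2 := logDeriv_qPoch_comp_cexp hq (-(2 * π * I)) z
    (by simpa only [neg_mul] using pow_succ_mul_cexp_neg_ne_one hz)
  simp only [neg_mul, neg_neg] at hlog2
  rw [show thetaProd τ = fun z => (cexp (π * I * z) - cexp (-(π * I * z))) *
      qPoch (cexp (2 * π * I * τ)) (cexp (2 * π * I * z)) *
      qPoch (cexp (2 * π * I * τ)) (cexp (-(2 * π * I * z))) from rfl,
    logDeriv_mul (f := fun z => (cexp (π * I * z) - cexp (-(π * I * z))) *
      qPoch (cexp (2 * π * I * τ)) (cexp (2 * π * I * z))) z (mul_ne_zero hW h1) h2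
      (by fun_prop) (by fun_prop),
    logDeriv_mul (f := fun z => cexp (π * I * z) - cexp (-(π * I * z))) z hW h1
      (by fun_prop) (by fun_prop), logDeriv_sub_cexp_neg hW,
    logDeriv_qPoch_comp_cexp hq (2 * π * I) z (pow_succ_mul_cexp_ne_one hz), hlog2,
    Complex.exp_neg, Summable.tsum_sub (summable_norm_pow_succ_mul_div hq _ _).of_norm
      (summable_norm_pow_succ_mul_div hq _ _).of_norm]
  ring

end thetaProd

section ThetaRatio
variable {τ : ℂ}

lemma theta_eq_zero_and_deriv_thetaProd_ne_zero (hτ : 0 < τ.im) {z : ℂ}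
    (hz : thetaProd τ z = 0) : theta z τ = 0 ∧ deriv (thetaProd τ) z ≠ 0 := by
  have hL : InLattice τ z := by_contra fun h => thetaProd_ne_zero hτ h hz
  have hF := differentiable_thetaProd hτ
  have hθL := apply_eq_apply_zero_of_inLattice
    (periodic_eq_zero_of_quasiPeriodic (f := (theta · τ)) (c := fun _ => -1) (by simp)
      theta_add_one)
    (periodic_eq_zero_of_quasiPeriodic (thetaFactor_ne_zero τ) theta_add_tau) hL
  have hFL := apply_eq_apply_zero_of_inLattice
    (periodic_simpleZero_of_quasiPeriodic hF (differentiable_const _) (by simp) thetaProd_add_one)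
    (periodic_simpleZero_of_quasiPeriodic hF (differentiable_thetaFactor τ) (thetaFactor_ne_zero τ)
      (thetaProd_add_tau hτ)) hL
  simp only [eq_iff_iff] at hθL hFL
  exact ⟨hθL.2 theta_zero, (hFL.2 ⟨thetaProd_zero, deriv_thetaProd_zero_ne_zero hτ⟩).2⟩

lemma exists_theta_eq_const_mul_thetaProd (hτ : 0 < τ.im) :
    ∃ C ≠ 0, ∀ z, theta z τ = C * thetaProd τ z := by
  have hθ := differentiable_theta hτ
  have hF := differentiable_thetaProd hτ
  have hzero := fun z (hz : thetaProd τ z = 0) => theta_eq_zero_and_deriv_thetaProd_ne_zero hτ hz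
  set ψ := lhopitalDiv (theta · τ) (thetaProd τ)
  have hψ : Differentiable ℂ ψ := differentiable_lhopitalDiv hθ hF hzero
  have hψ1 : Periodic ψ 1 := lhopitalDiv_add_of_quasiPeriodic hθ hF (differentiable_const _)
    (by simp) theta_add_one thetaProd_add_one fun z hz => (hzero z hz).1
  have hψτ : Periodic ψ τ := lhopitalDiv_add_of_quasiPeriodic hθ hF (differentiable_thetaFactor τ)
    (thetaFactor_ne_zero τ) theta_add_tau (thetaProd_add_tau hτ) fun z hz => (hzero z hz).1
  have hconst := hψ.apply_eq_apply_of_bounded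
    (isBounded_range_of_periodic hτ hψ.continuous hψ1 hψτ)
  have hθF : ∀ z, theta z τ = ψ 0 * thetaProd τ z := fun z => by
    rw [← hconst z 0, lhopitalDiv_mul (fun z hz => (hzero z hz).1)]
  refine ⟨ψ 0, fun h => ?_, hθF⟩
  obtain ⟨z, hz⟩ := exists_theta_ne_zero hτ
  exact hz (by rw [hθF, h, zero_mul])

end ThetaRatio

theorem dlogTheta_q_expansion (τ z : ℂ) (hτ : 0 < τ.im) (hz : ¬ InLattice τ z) :
    Summable (fun n : ℕ =>
      ‖Complex.exp (2 * π * I * τ) ^ (n + 1) * Complex.exp (2 * π * I * z) /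
          (1 - Complex.exp (2 * π * I * τ) ^ (n + 1) * Complex.exp (2 * π * I * z)) -
        Complex.exp (2 * π * I * τ) ^ (n + 1) * (Complex.exp (2 * π * I * z))⁻¹ /
          (1 - Complex.exp (2 * π * I * τ) ^ (n + 1) * (Complex.exp (2 * π * I * z))⁻¹)‖) ∧
    dlogTheta z τ =
      π * I * (Complex.exp (2 * π * I * z) + 1) / (Complex.exp (2 * π * I * z) - 1) -
      2 * π * I * ∑' n : ℕ,
        (Complex.exp (2 * π * I * τ) ^ (n + 1) * Complex.exp (2 * π * I * z) /
            (1 - Complex.exp (2 * π * I * τ) ^ (n + 1) * Complex.exp (2 * π * I * z)) -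
          Complex.exp (2 * π * I * τ) ^ (n + 1) * (Complex.exp (2 * π * I * z))⁻¹ /
            (1 - Complex.exp (2 * π * I * τ) ^ (n + 1) * (Complex.exp (2 * π * I * z))⁻¹)) := by
  have hq := norm_cexp_two_pi_I_lt_one hτ
  refine ⟨((summable_norm_pow_succ_mul_div hq _ _).add
    (summable_norm_pow_succ_mul_div hq _ _)).of_nonneg_of_le (fun _ => norm_nonneg _)
    fun _ => norm_sub_le _ _, ?_⟩
  obtain ⟨C, hC, hθ⟩ := exists_theta_eq_const_mul_thetaProd hτ
  rw [← logDeriv_thetaProd hτ hz, ← logDeriv_const_mul z C hC, ← funext hθ]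
  rfl
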